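/- arXiv:1303.2227 — 3 statements merged into one kernel-verified Lean document; each statement's English description precedes it below -/
import Mathlib

section
/- For all integers n ≥ 1 and t ≥ 1, H*_n({2}^t) = -2·∑_{k=1}^{n} (-1)^k·C(n,k)/(k^{2t}·C(n+k,k)). -/
/-!
Write `b(n, k) = C(n,k) / C(n+k,k) = n!² / ((n-k)! (n+k)!)`, which vanishes for `k > n`.
Comparing factorials gives two first-order recurrences, one in `k` and one in `n`, and each
makes a sum telescope: `∑_{k=1}^n (-1)^k b(n,k) = -1/2` (the case `t = 0`) and
`∑_{k=1}^n b(k,i) / k² = b(n,i) / i²`. The induction step on `t` peels one `2` off,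
`H*_n({2}^{t+1}) = ∑_{k ≤ n} H*_k({2}^t) / k²`, inserts the formula for `t`, swaps the two
sums and applies the second identity.
-/

open Finset

/-- Sign factor for an alternating multiple harmonic sum entry. -/
def aSgn (s : ℤ) : ℚ := if 0 < s then 1 else -1

/-- Alternating multiple harmonic sum `H_n(s₁,…,s_ℓ)` (strict indices). -/
def Hh : ℕ → List ℤ → ℚ
  | _, [] => 1
  | n, s :: r => ∑ k ∈ Finset.Icc 1 n, aSgn s ^ k / (k : ℚ) ^ s.natAbs * Hh (k - 1) r

/-- Alternating multiple harmonic star sum `H*_n(s₁,…,s_ℓ)` (weak indices). -/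
def Hstar : ℕ → List ℤ → ℚ
  | _, [] => 1
  | n, s :: r => ∑ k ∈ Finset.Icc 1 n, aSgn s ^ k / (k : ℚ) ^ s.natAbs * Hstar k r

/-- All compositions (ordered tuples of positive integers) of `w`. -/
def comps : ℕ → List (List ℕ)
  | 0 => [[]]
  | (w+1) => (List.range (w+1)).flatMap (fun j => (comps (w - j)).map (fun l => (j+1) :: l))
decreasing_by simp_wf <;> omega

/-- Coerce a list of naturals to a list of integers. -/
def natList (l : List ℕ) : List ℤ := l.map (fun m => (m : ℤ))

open Nat

def binomRatio (n k : ℕ) : ℚ := (n.choose k : ℚ) / ((n + k).choose k)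

lemma binomRatio_eq_factorial {n k : ℕ} (h : k ≤ n) :
    binomRatio n k = (n ! : ℚ) ^ 2 / ((n - k)! * (n + k)!) := by
  rw [binomRatio, cast_choose ℚ h, cast_choose ℚ (le_add_left k n), Nat.add_sub_cancel]
  field_simp

lemma binomRatio_of_lt {n k : ℕ} (h : n < k) : binomRatio n k = 0 := by
  simp [binomRatio, choose_eq_zero_of_lt h]

@[simp]
lemma binomRatio_zero_right (n : ℕ) : binomRatio n 0 = 1 := by
  simp [binomRatio]

lemma binomRatio_mul_sub (n k : ℕ) :
    binomRatio n k * (n - k) = binomRatio n (k + 1) * (n + k + 1) := by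
  rcases lt_or_ge n (k + 1) with hlt | hle
  · rw [binomRatio_of_lt hlt]
    rcases (Nat.lt_succ_iff.mp hlt).eq_or_lt with rfl | hlt'
    · ring
    · rw [binomRatio_of_lt hlt']; ring
  · obtain ⟨d, rfl⟩ := Nat.exists_eq_add_of_le hle
    rw [binomRatio_eq_factorial (by omega), binomRatio_eq_factorial hle,
      show k + 1 + d - k = d + 1 by omega, show k + 1 + d - (k + 1) = d by omega,
      show k + 1 + d + (k + 1) = (k + 1 + d + k) + 1 by omega, factorial_succ, factorial_succ]
    push_cast
    field_simp
    ring

lemma binomRatio_mul_succ_sq (n k : ℕ) :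
    binomRatio n k * (n + 1) ^ 2 = binomRatio (n + 1) k * ((n + 1) ^ 2 - k ^ 2) := by
  rcases lt_or_ge n k with hlt | hle
  · rw [binomRatio_of_lt hlt]
    rcases (Nat.succ_le_of_lt hlt).eq_or_lt with rfl | hlt'
    · push_cast; ring
    · rw [binomRatio_of_lt hlt']; ring
  · obtain ⟨d, rfl⟩ := Nat.exists_eq_add_of_le hle
    rw [binomRatio_eq_factorial hle, binomRatio_eq_factorial (by omega),
      show k + d - k = d by omega, show k + d + 1 - k = d + 1 by omega,
      show k + d + 1 + k = (k + d + k) + 1 by omega, factorial_succ, factorial_succ, factorial_succ]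
    push_cast
    field_simp
    ring

lemma sum_neg_one_pow_mul_binomRatio {n : ℕ} (hn : n ≠ 0) :
    ∑ k ∈ Icc 1 n, (-1 : ℚ) ^ k * binomRatio n k = -1 / 2 := by
  -- `F (k + 1) - F k = 2n (-1)^k binomRatio n k` is `binomRatio_mul_sub` in disguise.
  set F : ℕ → ℚ := fun k => (-1) ^ (k + 1) * binomRatio n k * (n + k)
  have hterm : ∀ k, (-1 : ℚ) ^ k * binomRatio n k * (2 * n) = F (k + 1) - F k := by
    intro k
    simp only [F]
    push_cast
    linear_combination (-1 : ℚ) ^ k * binomRatio_mul_sub n k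
  have htel : (∑ k ∈ Icc 1 n, (-1 : ℚ) ^ k * binomRatio n k) * (2 * n) = -n := by
    rw [sum_mul, sum_congr rfl fun k _ => hterm k, sum_Icc_sub (by omega)]
    have := binomRatio_mul_sub n 0
    simp only [F, binomRatio_of_lt (by omega : n < n + 1), binomRatio_zero_right] at this ⊢
    push_cast at this ⊢
    linear_combination this
  have : (n : ℚ) ≠ 0 := by exact_mod_cast hn
  apply mul_right_cancel₀ (by positivity : (2 * n : ℚ) ≠ 0)
  rw [htel]
  field_simp

lemma sum_binomRatio_div_sq {j : ℕ} (hj : j ≠ 0) (n : ℕ) :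
    ∑ k ∈ Icc 1 n, binomRatio k j / (k : ℚ) ^ 2 = binomRatio n j / (j : ℚ) ^ 2 := by
  induction n with
  | zero => simp [binomRatio_of_lt (Nat.pos_of_ne_zero hj)]
  | succ m ih =>
    rw [sum_Icc_succ_top (by omega), ih]
    have hj2 : (j : ℚ) ^ 2 ≠ 0 := by positivity
    push_cast
    rw [div_add_div _ _ hj2 (by positivity), div_eq_div_iff (by positivity) hj2]
    linear_combination (j : ℚ) ^ 2 * binomRatio_mul_succ_sq m j

lemma sum_Icc_mul_binomRatio_of_le (f : ℕ → ℚ) {k n : ℕ} (hkn : k ≤ n) :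
    ∑ i ∈ Icc 1 k, f i * binomRatio k i = ∑ i ∈ Icc 1 n, f i * binomRatio k i := by
  refine sum_subset (Icc_subset_Icc_right hkn) fun i hi hik => ?_
  rw [binomRatio_of_lt (by simp_all), mul_zero]

lemma Hstar_two_cons (n : ℕ) (r : List ℤ) :
    Hstar n (2 :: r) = ∑ k ∈ Icc 1 n, Hstar k r / (k : ℚ) ^ 2 := by
  simp [Hstar, aSgn, div_eq_inv_mul]

lemma Hstar_replicate_two (t : ℕ) {n : ℕ} (hn : n ≠ 0) :
    Hstar n (List.replicate t 2)
      = -2 * ∑ k ∈ Icc 1 n, (-1 : ℚ) ^ k / (k : ℚ) ^ (2 * t) * binomRatio n k := by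
  induction t generalizing n with
  | zero => norm_num [Hstar, sum_neg_one_pow_mul_binomRatio hn]
  | succ t ih =>
    rw [List.replicate_succ, Hstar_two_cons]
    -- `binomRatio k i = 0` for `i > k`, so every inner sum may run up to `n` and the two sums swap.
    calc ∑ k ∈ Icc 1 n, Hstar k (List.replicate t 2) / (k : ℚ) ^ 2
        = ∑ k ∈ Icc 1 n, ∑ i ∈ Icc 1 n,
            -2 * ((-1 : ℚ) ^ i / (i : ℚ) ^ (2 * t)) * (binomRatio k i / (k : ℚ) ^ 2) := by
          refine sum_congr rfl fun k hk => ?_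
          obtain ⟨hk1, hkn⟩ := mem_Icc.mp hk
          rw [ih (by omega), sum_Icc_mul_binomRatio_of_le _ hkn, mul_sum, sum_div]
          exact sum_congr rfl fun i _ => by ring
      _ = ∑ i ∈ Icc 1 n,
            -2 * ((-1 : ℚ) ^ i / (i : ℚ) ^ (2 * t)) * (binomRatio n i / (i : ℚ) ^ 2) := by
          rw [sum_comm]
          refine sum_congr rfl fun i hi => ?_
          rw [← mul_sum, sum_binomRatio_div_sq (by simp at hi; omega)]
      _ = _ := by
          rw [mul_sum]
          exact sum_congr rfl fun i _ => by ring

theorem stmt5_general (n t : ℕ) (hn : 1 ≤ n) :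
    Hstar n (List.replicate t 2)
      = -2 * ∑ k ∈ Finset.Icc 1 n,
          (-1 : ℚ) ^ k * (n.choose k) / ((k : ℚ) ^ (2*t) * ((n+k).choose k)) := by
  rw [Hstar_replicate_two t (by omega)]
  congr 1
  exact sum_congr rfl fun k _ => div_mul_div_comm _ _ _ _

theorem stmt5 (n t : ℕ) (hn : 1 ≤ n) (ht : 1 ≤ t) :
    Hstar n (List.replicate t 2)
      = -2 * ∑ k ∈ Finset.Icc 1 n,
          (-1 : ℚ) ^ k * (n.choose k) / ((k : ℚ) ^ (2*t) * ((n+k).choose k)) :=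
  stmt5_general n t hn
end

section
/- For all integers n ≥ 1 and a1, b, a2 ≥ 0, H*_n({2}^{a1},1,{2}^b,3,{2}^{a2},1) = 2·∑_{k=1}^{n} C(n,k)/(k^{2(a1+b+a2)+5}·C(n+k,k)) + 4·∑_{k=1}^{n} H_{k-1}(2b+2a2+4)·C(n,k)/(k^{2a1+1}·C(n+k,k)) + 4·∑_{k=1}^{n} (-1)^k·H_{k-1}(-(2a2+2))·C(n,k)/(k^{2a1+2b+3}·C(n+k,k)) + 8·∑_{k=1}^{n} H_{k-1}(-(2b+2), -(2a2+2))·C(n,k)/(k^{2a1+1}·C(n+k,k)). -/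
open Finset

/-! With `A n k = C(n,k) / C(n+k,k)` one has `A (n+1) k - A n k = k² A (n+1) k / (n+1)²` and
`(n+k+1) A n (k+1) = (n-k) A n k`. Hence, if `H*_m(w) = ∑ₖ g(k) A m k` for all `m`, then
prepending `2`, `1` or `3` to `w` again gives a sum of this shape: for `2` the coefficient
becomes `g(k)/k²`, for `1` and `3` partial sums of `g` appear, after Abel summation against the
telescoping sums `2 ∑_{j>k} j A n j = (n-k) A n k` and
`2n ∑_{j>k} (-1)ʲ A n j = (-1)ᵏ (k-n) A n k`. Starting from `H*_n(1) = 2 ∑ₖ A n k / k` and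
reading the word from right to left yields the formula. -/

def chooseRatio (n k : ℕ) : ℚ := (n.choose k : ℚ) / ((n + k).choose k : ℚ)

lemma chooseRatio_of_lt {n k : ℕ} (h : n < k) : chooseRatio n k = 0 := by
  simp [chooseRatio, Nat.choose_eq_zero_of_lt h]

@[simp] lemma chooseRatio_zero_right (n : ℕ) : chooseRatio n 0 = 1 := by
  simp [chooseRatio]

lemma cast_choose_add_right_ne_zero (n k : ℕ) : ((n + k).choose k : ℚ) ≠ 0 := by
  exact_mod_cast (Nat.choose_pos (Nat.le_add_left k n)).ne'

lemma cast_choose_succ_right_mul (n k : ℕ) :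
    (n.choose (k + 1) : ℚ) * (k + 1) = n.choose k * (n - k) := by
  rcases le_or_gt k n with h | h
  · have := Nat.choose_succ_right_eq n k
    rw [← Nat.cast_inj (R := ℚ)] at this
    push_cast [Nat.cast_sub h] at this
    exact this
  · simp [Nat.choose_eq_zero_of_lt h, Nat.choose_eq_zero_of_lt (h.trans (Nat.lt_succ_self k))]

lemma cast_choose_mul_succ (n k : ℕ) :
    (n.choose k : ℚ) * (n + 1) = (n + 1).choose k * (n + 1 - k) := by
  rcases le_or_gt k (n + 1) with h | h
  · have := Nat.choose_mul_succ_eq n k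
    rw [← Nat.cast_inj (R := ℚ)] at this
    push_cast [Nat.cast_sub h] at this
    exact this
  · simp [Nat.choose_eq_zero_of_lt h, Nat.choose_eq_zero_of_lt (Nat.lt_of_succ_lt h)]

lemma chooseRatio_succ_right (n k : ℕ) :
    (n + k + 1) * chooseRatio n (k + 1) = (n - k) * chooseRatio n k := by
  have h₁ := cast_choose_succ_right_mul n k
  have h₂ : ((n + k : ℕ) + 1 : ℚ) * (n + k).choose k
      = (n + k + 1).choose (k + 1) * (k + 1) := by
    exact_mod_cast Nat.add_one_mul_choose_eq (n + k) k
  have h₃ := cast_choose_add_right_ne_zero n k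
  have h₄ := cast_choose_add_right_ne_zero n (k + 1)
  rw [← add_assoc] at h₄
  simp only [chooseRatio, ← add_assoc]
  field_simp
  push_cast at h₂
  linear_combination ((n + k + 1).choose (k + 1) : ℚ) * h₁ + (n.choose (k + 1) : ℚ) * h₂

lemma chooseRatio_succ_left_sub (n k : ℕ) :
    chooseRatio (n + 1) k - chooseRatio n k = k ^ 2 * chooseRatio (n + 1) k / (n + 1) ^ 2 := by
  have h₁ := cast_choose_mul_succ n k
  have h₂ := cast_choose_mul_succ (n + k) k
  have h₃ := cast_choose_add_right_ne_zero n k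
  have h₄ := cast_choose_add_right_ne_zero (n + 1) k
  rw [add_right_comm] at h₄
  simp only [chooseRatio, add_right_comm n 1 k]
  push_cast at h₂ ⊢
  field_simp
  linear_combination -(((n + k + 1).choose k : ℚ) * (n + 1)) * h₁
    + ((n + 1).choose k * (n + 1 - k) : ℚ) * h₂

lemma two_mul_sum_Ioc_mul_chooseRatio {k n : ℕ} (hk : k ≤ n) :
    2 * ∑ j ∈ Ioc k n, (j : ℚ) * chooseRatio n j = (n - k) * chooseRatio n k := by
  have telescope : ∀ m, k ≤ m → 2 * ∑ j ∈ Ioc k m, (j : ℚ) * chooseRatio n j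
      = (n - k) * chooseRatio n k - (n - m) * chooseRatio n m := by
    intro m hm
    induction m, hm using Nat.le_induction with
    | base => simp
    | succ m _ ih =>
      rw [sum_Ioc_succ_top (by omega), mul_add, ih]
      push_cast
      linear_combination chooseRatio_succ_right n m
  simpa using telescope n hk

lemma two_mul_sum_Ioc_neg_one_pow_mul_chooseRatio {k n : ℕ} (hk : k ≤ n) :
    2 * n * ∑ j ∈ Ioc k n, (-1 : ℚ) ^ j * chooseRatio n j
      = (-1) ^ k * (k - n) * chooseRatio n k := by
  have telescope : ∀ m, k ≤ m → 2 * n * ∑ j ∈ Ioc k m, (-1 : ℚ) ^ j * chooseRatio n j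
      = (-1) ^ k * (k - n) * chooseRatio n k - (-1) ^ m * (m - n) * chooseRatio n m := by
    intro m hm
    induction m, hm using Nat.le_induction with
    | base => simp
    | succ m _ ih =>
      rw [sum_Ioc_succ_top (by omega), mul_add, ih, pow_succ]
      push_cast
      linear_combination (-(-1 : ℚ) ^ m) * chooseRatio_succ_right n m
  simpa using telescope n hk

lemma cast_ne_zero_of_mem_Icc_one {k n : ℕ} (hk : k ∈ Icc 1 n) : (k : ℚ) ≠ 0 :=
  Nat.cast_ne_zero.2 (Nat.one_le_iff_ne_zero.1 (mem_Icc.1 hk).1)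

def binomSum (n : ℕ) (g : ℕ → ℚ) : ℚ := ∑ k ∈ Icc 1 n, g k * chooseRatio n k

lemma binomSum_congr {n : ℕ} {f g : ℕ → ℚ} (h : ∀ k ∈ Icc 1 n, f k = g k) :
    binomSum n f = binomSum n g :=
  sum_congr rfl fun k hk => by rw [h k hk]

lemma binomSum_add (n : ℕ) (f g : ℕ → ℚ) :
    binomSum n (fun k => f k + g k) = binomSum n f + binomSum n g := by
  simp only [binomSum, add_mul, sum_add_distrib]

lemma binomSum_const_mul (n : ℕ) (c : ℚ) (g : ℕ → ℚ) :
    binomSum n (fun k => c * g k) = c * binomSum n g := by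
  simp only [binomSum, mul_sum, mul_assoc]

lemma binomSum_succ_sub (n : ℕ) (g : ℕ → ℚ) :
    binomSum (n + 1) g - binomSum n g = binomSum (n + 1) (fun k => k ^ 2 * g k) / (n + 1) ^ 2 := by
  have extend : binomSum n g = ∑ k ∈ Icc 1 (n + 1), g k * chooseRatio n k := by
    rw [sum_Icc_succ_top (by omega), chooseRatio_of_lt n.lt_succ_self, mul_zero, add_zero,
      binomSum]
  rw [extend, binomSum, binomSum, ← sum_sub_distrib, sum_div]
  refine sum_congr rfl fun k _ => ?_
  linear_combination g k * chooseRatio_succ_left_sub n k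

lemma sum_Icc_partialSum_mul {R : Type*} [NonUnitalNonAssocSemiring R] (n : ℕ) (f w : ℕ → R) :
    ∑ k ∈ Icc 1 n, (∑ j ∈ Icc 1 (k - 1), f j) * w k
      = ∑ j ∈ Icc 1 n, f j * ∑ k ∈ Ioc j n, w k := by
  simp only [sum_mul, mul_sum]
  exact sum_comm' fun k j => by simp only [mem_Icc, mem_Ioc]; omega

lemma binomSum_mul_partialSum (n : ℕ) (g : ℕ → ℚ) :
    binomSum n (fun k => 2 * k * ∑ j ∈ Icc 1 (k - 1), g j)
      = binomSum n (fun k => (n - k) * g k) := by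
  calc binomSum n (fun k => 2 * k * ∑ j ∈ Icc 1 (k - 1), g j)
      = ∑ k ∈ Icc 1 n, (∑ j ∈ Icc 1 (k - 1), g j) * (2 * k * chooseRatio n k) :=
        sum_congr rfl fun k _ => by ring
    _ = ∑ j ∈ Icc 1 n, g j * ∑ k ∈ Ioc j n, 2 * k * chooseRatio n k :=
        sum_Icc_partialSum_mul ..
    _ = binomSum n (fun k => (n - k) * g k) := by
        refine sum_congr rfl fun j hj => ?_
        simp only [mul_assoc, ← mul_sum]
        rw [two_mul_sum_Ioc_mul_chooseRatio (mem_Icc.1 hj).2]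
        ring

lemma binomSum_neg_one_pow_mul_partialSum (n : ℕ) (g : ℕ → ℚ) :
    binomSum n (fun k => 2 * n * (-1) ^ k * ∑ j ∈ Icc 1 (k - 1), (-1) ^ j * g j)
      = binomSum n (fun k => (k - n) * g k) := by
  calc binomSum n (fun k => 2 * n * (-1) ^ k * ∑ j ∈ Icc 1 (k - 1), (-1) ^ j * g j)
      = ∑ k ∈ Icc 1 n, (∑ j ∈ Icc 1 (k - 1), (-1) ^ j * g j)
          * (2 * n * (-1) ^ k * chooseRatio n k) :=
        sum_congr rfl fun k _ => by ring
    _ = ∑ j ∈ Icc 1 n, (-1) ^ j * g j * ∑ k ∈ Ioc j n, 2 * n * (-1) ^ k * chooseRatio n k :=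
        sum_Icc_partialSum_mul ..
    _ = binomSum n (fun k => (k - n) * g k) := by
        refine sum_congr rfl fun j hj => ?_
        have hsq : ((-1 : ℚ) ^ j) ^ 2 = 1 := by rw [← pow_mul, pow_mul', neg_one_sq, one_pow]
        simp only [mul_assoc, ← mul_sum]
        linear_combination (-1) ^ j * g j * two_mul_sum_Ioc_neg_one_pow_mul_chooseRatio
          (mem_Icc.1 hj).2 + (j - n) * g j * chooseRatio n j * hsq

lemma sum_Icc_binomSum_div_sq (g : ℕ → ℚ) (n : ℕ) :
    ∑ m ∈ Icc 1 n, binomSum m g / m ^ 2 = binomSum n (fun k => g k / k ^ 2) := by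
  induction n with
  | zero => simp [binomSum]
  | succ n ih =>
    have cancel : binomSum (n + 1) (fun k => k ^ 2 * (g k / k ^ 2)) = binomSum (n + 1) g :=
      binomSum_congr fun k hk => by
        have := cast_ne_zero_of_mem_Icc_one hk
        field_simp
    rw [sum_Icc_succ_top (by omega), ih]
    push_cast
    linear_combination -(binomSum_succ_sub n fun k => g k / k ^ 2) - cancel / (n + 1 : ℚ) ^ 2

lemma sum_Icc_binomSum_div (g : ℕ → ℚ) (n : ℕ) :
    ∑ m ∈ Icc 1 n, binomSum m g / m
      = binomSum n (fun k => (g k + 2 * ∑ j ∈ Icc 1 (k - 1), g j) / k) := by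
  induction n with
  | zero => simp [binomSum]
  | succ n ih =>
    have key : binomSum (n + 1) (fun k => k ^ 2 * ((g k + 2 * ∑ j ∈ Icc 1 (k - 1), g j) / k))
        = (n + 1) * binomSum (n + 1) g :=
      calc _ = binomSum (n + 1) (fun k => k * g k + 2 * k * ∑ j ∈ Icc 1 (k - 1), g j) :=
            binomSum_congr fun k hk => by
              have := cast_ne_zero_of_mem_Icc_one hk
              field_simp
        _ = binomSum (n + 1) (fun k => k * g k + ((n + 1 : ℕ) - k) * g k) := by
            rw [binomSum_add, binomSum_mul_partialSum, binomSum_add]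
        _ = (n + 1) * binomSum (n + 1) g := by
            rw [← binomSum_const_mul]
            exact binomSum_congr fun k _ => by push_cast; ring
    rw [sum_Icc_succ_top (by omega), ih]
    have step := binomSum_succ_sub n fun k => (g k + 2 * ∑ j ∈ Icc 1 (k - 1), g j) / k
    rw [key] at step
    push_cast at step ⊢
    field_simp at step ⊢
    linear_combination -step

lemma sum_Icc_binomSum_div_cube (g : ℕ → ℚ) (n : ℕ) :
    ∑ m ∈ Icc 1 n, binomSum m g / m ^ 3
      = binomSum n (fun k =>
          (g k / k + 2 * (-1) ^ k * ∑ j ∈ Icc 1 (k - 1), (-1) ^ j * (g j / j)) / k ^ 2) := by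
  induction n with
  | zero => simp [binomSum]
  | succ n ih =>
    have key : (n + 1) * binomSum (n + 1) (fun k => k ^ 2 * ((g k / k
          + 2 * (-1) ^ k * ∑ j ∈ Icc 1 (k - 1), (-1) ^ j * (g j / j)) / k ^ 2))
        = binomSum (n + 1) g :=
      calc _ = binomSum (n + 1) (fun k => (n + 1 : ℕ) * (g k / k)
              + 2 * (n + 1 : ℕ) * (-1) ^ k * ∑ j ∈ Icc 1 (k - 1), (-1) ^ j * (g j / j)) := by
            rw [← binomSum_const_mul]
            refine binomSum_congr fun k hk => ?_
            have := cast_ne_zero_of_mem_Icc_one hk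
            field_simp
            push_cast
            ring
        _ = binomSum (n + 1)
              (fun k => (n + 1 : ℕ) * (g k / k) + (k - (n + 1 : ℕ)) * (g k / k)) := by
            rw [binomSum_add, binomSum_neg_one_pow_mul_partialSum, binomSum_add]
        _ = binomSum (n + 1) g :=
            binomSum_congr fun k hk => by
              have := cast_ne_zero_of_mem_Icc_one hk
              field_simp
              ring
    rw [sum_Icc_succ_top (by omega), ih]
    have step := binomSum_succ_sub n fun k => (g k / k
      + 2 * (-1) ^ k * ∑ j ∈ Icc 1 (k - 1), (-1) ^ j * (g j / j)) / k ^ 2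
    rw [← key]
    push_cast at step ⊢
    field_simp at step ⊢
    linear_combination -step

lemma Hstar_cons_of_pos {s : ℤ} (hs : 0 < s) (n : ℕ) (L : List ℤ) :
    Hstar n (s :: L) = ∑ m ∈ Icc 1 n, Hstar m L / m ^ s.natAbs := by
  simp only [Hstar, aSgn, if_pos hs, one_pow]
  exact sum_congr rfl fun m _ => by ring

lemma Hh_cons_of_pos {s : ℤ} (hs : 0 < s) (n : ℕ) (L : List ℤ) :
    Hh n (s :: L) = ∑ j ∈ Icc 1 n, Hh (j - 1) L / j ^ s.natAbs := by
  simp only [Hh, aSgn, if_pos hs, one_pow]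
  exact sum_congr rfl fun m _ => by ring

lemma Hh_cons_of_neg {s : ℤ} (hs : s < 0) (n : ℕ) (L : List ℤ) :
    Hh n (s :: L) = ∑ j ∈ Icc 1 n, (-1) ^ j * Hh (j - 1) L / j ^ s.natAbs := by
  simp only [Hh, aSgn, if_neg hs.not_gt]
  exact sum_congr rfl fun m _ => by ring

lemma Hstar_singleton_one (n : ℕ) : Hstar n [1] = binomSum n (fun k => 2 / k) := by
  induction n with
  | zero => simp [Hstar, binomSum]
  | succ n ih =>
    have key : binomSum (n + 1) (fun k => k ^ 2 * (2 / k)) = n + 1 := by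
      calc _ = 2 * ∑ k ∈ Ioc 0 (n + 1), (k : ℚ) * chooseRatio (n + 1) k := by
            rw [mul_sum, ← Icc_add_one_left_eq_Ioc]
            refine sum_congr rfl fun k hk => ?_
            have := cast_ne_zero_of_mem_Icc_one hk
            field_simp
        _ = n + 1 := by
            rw [two_mul_sum_Ioc_mul_chooseRatio (Nat.zero_le _)]
            simp
    have step := binomSum_succ_sub n fun k => 2 / k
    rw [key] at step
    rw [Hstar_cons_of_pos one_pos, sum_Icc_succ_top (by omega), ← Hstar_cons_of_pos one_pos, ih]
    simp only [Hstar.eq_1, Int.natAbs_one, pow_one]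
    push_cast
    field_simp at step ⊢
    linear_combination -step

lemma Hstar_replicate_two_append {L : List ℤ} {g : ℕ → ℚ}
    (h : ∀ m, Hstar m L = binomSum m g) (a n : ℕ) :
    Hstar n (List.replicate a 2 ++ L) = binomSum n (fun k => g k / k ^ (2 * a)) := by
  induction a generalizing n with
  | zero => simp [h]
  | succ a ih =>
    rw [List.replicate_succ, List.cons_append, Hstar_cons_of_pos two_pos]
    simp only [ih, Int.reduceAbs, sum_Icc_binomSum_div_sq]
    exact binomSum_congr fun k _ => by ring

lemma Hstar_twos_one (c n : ℕ) :
    Hstar n (List.replicate c 2 ++ [1]) = binomSum n (fun k => 2 / k ^ (2 * c + 1)) :=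
  (Hstar_replicate_two_append Hstar_singleton_one c n).trans (binomSum_congr fun k _ => by ring)

lemma Hstar_three_twos_one (c n : ℕ) :
    Hstar n (3 :: (List.replicate c 2 ++ [1]))
      = binomSum n (fun k =>
          2 / k ^ (2 * c + 4) + 4 * (-1) ^ k * Hh (k - 1) [-(2 * c + 2)] / k ^ 2) := by
  rw [Hstar_cons_of_pos three_pos]
  simp only [Hstar_twos_one, Int.reduceAbs, sum_Icc_binomSum_div_cube]
  refine binomSum_congr fun k hk => ?_
  have inner : ∑ j ∈ Icc 1 (k - 1), (-1) ^ j * (2 / (j : ℚ) ^ (2 * c + 1) / j)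
      = 2 * Hh (k - 1) [-(2 * c + 2)] := by
    rw [Hh_cons_of_neg (by omega), show (-(2 * (c : ℤ) + 2)).natAbs = 2 * c + 2 by omega, mul_sum]
    exact sum_congr rfl fun j _ => by rw [Hh.eq_1]; ring
  have := cast_ne_zero_of_mem_Icc_one hk
  rw [inner]
  field_simp
  ring

lemma Hstar_one_twos_three_twos_one (b c n : ℕ) :
    Hstar n (1 :: (List.replicate b 2 ++ 3 :: (List.replicate c 2 ++ [1])))
      = binomSum n (fun k => 2 / k ^ (2 * b + 2 * c + 5)
          + 4 * Hh (k - 1) [2 * b + 2 * c + 4] / k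
          + 4 * (-1) ^ k * Hh (k - 1) [-(2 * c + 2)] / k ^ (2 * b + 3)
          + 8 * Hh (k - 1) [-(2 * b + 2), -(2 * c + 2)] / k) := by
  rw [Hstar_cons_of_pos one_pos]
  simp only [Hstar_replicate_two_append (Hstar_three_twos_one c) b, Int.natAbs_one, pow_one,
    sum_Icc_binomSum_div]
  refine binomSum_congr fun k hk => ?_
  have inner : ∑ j ∈ Icc 1 (k - 1),
      (2 / (j : ℚ) ^ (2 * c + 4) + 4 * (-1) ^ j * Hh (j - 1) [-(2 * c + 2)] / j ^ 2) / j ^ (2 * b)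
      = 2 * Hh (k - 1) [2 * b + 2 * c + 4] + 4 * Hh (k - 1) [-(2 * b + 2), -(2 * c + 2)] := by
    rw [Hh_cons_of_pos (by omega), Hh_cons_of_neg (by omega),
      show (2 * (b : ℤ) + 2 * c + 4).natAbs = 2 * b + 2 * c + 4 by omega,
      show (-(2 * (b : ℤ) + 2)).natAbs = 2 * b + 2 by omega,
      mul_sum, mul_sum, ← sum_add_distrib]
    exact sum_congr rfl fun j _ => by rw [Hh.eq_1]; ring
  have := cast_ne_zero_of_mem_Icc_one hk
  rw [inner]
  field_simp
  ring

theorem stmt11_general (n a1 b a2 : ℕ) :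
    Hstar n (List.replicate a1 2 ++ [1] ++ List.replicate b 2 ++ [3]
              ++ List.replicate a2 2 ++ [1])
      = 2 * ∑ k ∈ Finset.Icc 1 n,
            (n.choose k : ℚ) / ((k : ℚ) ^ (2*(a1+b+a2)+5) * ((n+k).choose k))
        + 4 * ∑ k ∈ Finset.Icc 1 n,
            Hh (k-1) [2 * (b : ℤ) + 2 * (a2 : ℤ) + 4] * (n.choose k)
              / ((k : ℚ) ^ (2*a1+1) * ((n+k).choose k))
        + 4 * ∑ k ∈ Finset.Icc 1 n,
            (-1 : ℚ) ^ k * Hh (k-1) [-(2 * (a2 : ℤ) + 2)] * (n.choose k)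
              / ((k : ℚ) ^ (2*a1+2*b+3) * ((n+k).choose k))
        + 8 * ∑ k ∈ Finset.Icc 1 n,
            Hh (k-1) [-(2 * (b : ℤ) + 2), -(2 * (a2 : ℤ) + 2)] * (n.choose k)
              / ((k : ℚ) ^ (2*a1+1) * ((n+k).choose k)) := by
  have regroup : (List.replicate a1 2 ++ [1] ++ List.replicate b 2 ++ [3]
        ++ List.replicate a2 2 ++ [1] : List ℤ)
      = List.replicate a1 2 ++ 1 :: (List.replicate b 2 ++ 3 :: (List.replicate a2 2 ++ [1])) := by
    simp
  rw [regroup, Hstar_replicate_two_append (Hstar_one_twos_three_twos_one b a2) a1]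
  simp only [binomSum, chooseRatio, mul_sum, ← sum_add_distrib]
  exact sum_congr rfl fun k _ => by ring

theorem stmt11 (n a1 b a2 : ℕ) (hn : 1 ≤ n) :
    Hstar n (List.replicate a1 2 ++ [1] ++ List.replicate b 2 ++ [3]
              ++ List.replicate a2 2 ++ [1])
      = 2 * ∑ k ∈ Finset.Icc 1 n,
            (n.choose k : ℚ) / ((k : ℚ) ^ (2*(a1+b+a2)+5) * ((n+k).choose k))
        + 4 * ∑ k ∈ Finset.Icc 1 n,
            Hh (k-1) [2 * (b : ℤ) + 2 * (a2 : ℤ) + 4] * (n.choose k)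
              / ((k : ℚ) ^ (2*a1+1) * ((n+k).choose k))
        + 4 * ∑ k ∈ Finset.Icc 1 n,
            (-1 : ℚ) ^ k * Hh (k-1) [-(2 * (a2 : ℤ) + 2)] * (n.choose k)
              / ((k : ℚ) ^ (2*a1+2*b+3) * ((n+k).choose k))
        + 8 * ∑ k ∈ Finset.Icc 1 n,
            Hh (k-1) [-(2 * (b : ℤ) + 2), -(2 * (a2 : ℤ) + 2)] * (n.choose k)
              / ((k : ℚ) ^ (2*a1+1) * ((n+k).choose k)) :=
  stmt11_general n a1 b a2
end

section
/- For all integers n ≥ 1, a1, a2, t ≥ 0 and c1, c2 ≥ 1, H*_n({1}^{a1}, c1, {1}^{a2}, c2, {1}^t) = -∑_{k=1}^{n} (-1)^k·C(n,k)/k^{a1+c1+a2+c2+t} - ∑_{i2+j2+|x2|=c2, i2,j2≥1} ∑_{k=1}^{n} (-1)^k·H_{k-1}(x2, i2+t)·C(n,k)/k^{a1+c1+a2+j2} - ∑_{i1+j1+|x1|=c1, i1,j1≥1} ∑_{k=1}^{n} (-1)^k·H_{k-1}(x1, i1+a2+c2+t)·C(n,k)/k^{a1+j1} - ∑_{iα+jα+|xα|=cα,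 iα,jα≥1, α=1,2} ∑_{k=1}^{n} (-1)^k·H_{k-1}(x1, i1+a2+j2, x2, i2+t)·C(n,k)/k^{a1+j1}, where the inner sums over x1, x2 range over all (possibly empty) compositions of positive integers with the stated total weights |x1|, |x2|. -/
open Finset

/-!
Write `S_c F n = ∑_{k=1}^n F k / k^c`, so that `H*_n(c, s) = S_c (H*_·(s)) n`, and
`B_m(s)(n) = ∑_{k=1}^n (-1)^k C(n,k) H_{k-1}(s) / k^m`. For `n ≥ 1`, `H*_n({1}^t) = -B_t(∅)(n)`,
and the binomial sums `B` are stable under every `S_c`: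
`S_1 B_m(s) = B_{m+1}(s)` (absorption `C(n,k)/n = C(n-1,k-1)/k`) and
`S_c B_m(s) = B_{c+m}(s) + ∑_{i+j+|x|=c} B_j(x, i+m, s)`.
The second identity follows by induction on `c` from `S_{c+1} = S_1 ∘ Δ ∘ S_c`, with `Δ` the backward
difference, and `Δ B_j(y) = B_j(y) + B_0(j, y)`; after swapping the sums, the latter is a partial
alternating row sum of Pascal's triangle. Applying `S_{c₂}`, `S_1^{a₂}`, `S_{c₁}`, `S_1^{a₁}` to
`-B_t(∅)` gives the formula.
-/

theorem comps_zero : comps 0 = [[]] := by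
  rw [comps]

theorem sum_map_comps_succ {M : Type*} [AddCommMonoid M] (w : ℕ) (g : List ℕ → M) :
    ((comps (w + 1)).map g).sum
      = ∑ j ∈ range (w + 1), ((comps (w - j)).map fun x => g ((j + 1) :: x)).sum := by
  rw [comps, List.map_flatMap]
  simp only [List.map_map, Function.comp_def]
  generalize w + 1 = N
  induction N with
  | zero => simp
  | succ N ih => simp [List.range_succ, sum_range_succ, ih]

section blockSum

variable {M N : Type*} [AddCommMonoid M] [AddCommMonoid N]

/-- The sum of `f i j x` over `i, j ≥ 1` and compositions `x` with `i + j + |x| = c`. -/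
def blockSum (c : ℕ) (f : ℕ → ℕ → List ℕ → M) : M :=
  ∑ i ∈ range (c - 1), ∑ j ∈ range (c - 1 - i),
    ((comps (c - 2 - i - j)).map (f (i + 1) (j + 1))).sum

theorem map_blockSum {F : Type*} [FunLike F M N] [AddMonoidHomClass F M N] (φ : F) (c : ℕ)
    (f : ℕ → ℕ → List ℕ → M) : φ (blockSum c f) = blockSum c fun i j x => φ (f i j x) := by
  simp only [blockSum, map_sum, map_list_sum, List.map_map]
  rfl

theorem blockSum_apply {α : Type*} (c : ℕ) (f : ℕ → ℕ → List ℕ → α → M) (a : α) :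
    blockSum c f a = blockSum c fun i j x => f i j x a :=
  map_blockSum (Pi.evalAddMonoidHom (fun _ => M) a) c f

theorem blockSum_add (c : ℕ) (f g : ℕ → ℕ → List ℕ → M) :
    blockSum c (fun i j x => f i j x + g i j x) = blockSum c f + blockSum c g := by
  simp only [blockSum, List.sum_map_add, sum_add_distrib]

theorem blockSum_comm (c d : ℕ) (f : ℕ → ℕ → List ℕ → ℕ → ℕ → List ℕ → M) :
    blockSum c (fun i j x => blockSum d (f i j x))
      = blockSum d fun i' j' x' => blockSum c fun i j x => f i j x i' j' x' := by
  let φ : (ℕ → ℕ → List ℕ → M) →+ M :=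
    { toFun := blockSum d
      map_zero' := by simp [blockSum, Pi.zero_def]
      map_add' := blockSum_add d }
  have h := map_blockSum φ c f
  simp only [φ, AddMonoidHom.coe_mk, ZeroHom.coe_mk] at h
  rw [← h]
  congr
  funext i' j' x'
  simp only [blockSum_apply]

theorem blockSum_congr {c : ℕ} {f g : ℕ → ℕ → List ℕ → M}
    (h : ∀ i j x, 1 ≤ i → 1 ≤ j → f i j x = g i j x) : blockSum c f = blockSum c g := by
  refine sum_congr rfl fun i _ => sum_congr rfl fun j _ => ?_
  rw [show f (i + 1) (j + 1) = g (i + 1) (j + 1) from funext fun x => h _ _ _ (by omega) (by omega)]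

theorem blockSum_one (f : ℕ → ℕ → List ℕ → M) : blockSum 1 f = 0 := by
  simp [blockSum]

theorem blockSum_succ {c : ℕ} (hc : 1 ≤ c) (f : ℕ → ℕ → List ℕ → M) :
    blockSum (c + 1) f = f c 1 [] + blockSum c fun i j x => f i (j + 1) x + f i 1 (j :: x) := by
  obtain ⟨d, rfl⟩ := Nat.exists_eq_add_of_le' hc
  have split_j : ∀ i ∈ range (d + 1),
      ∑ j ∈ range (d + 1 - i), ((comps (d - i - j)).map (f (i + 1) (j + 1))).sum
        = ∑ j ∈ range (d - i), ((comps (d - 1 - i - j)).map (f (i + 1) (j + 1 + 1))).sum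
          + ((comps (d - i)).map (f (i + 1) 1)).sum := by
    intro i hi
    rw [show d + 1 - i = d - i + 1 by rw [mem_range] at hi; omega, sum_range_succ']
    congr 1
    refine sum_congr rfl fun j _ => ?_
    rw [show d - i - (j + 1) = d - 1 - i - j by omega]
  have split_x : ∀ i ∈ range d, ((comps (d - i)).map (f (i + 1) 1)).sum
      = ∑ j ∈ range (d - i), ((comps (d - 1 - i - j)).map fun x => f (i + 1) 1 ((j + 1) :: x)).sum := by
    intro i hi
    rw [show d - i = d - 1 - i + 1 by rw [mem_range] at hi; omega, sum_map_comps_succ]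
  simp only [blockSum, List.sum_map_add, sum_add_distrib, Nat.add_sub_cancel,
    show d + 1 + 1 - 2 = d by omega, show d + 1 - 2 = d - 1 by omega]
  rw [sum_congr rfl split_j, sum_add_distrib, sum_range_succ, sum_range_succ, sum_congr rfl split_x,
    Nat.sub_self, range_zero, sum_empty, comps_zero, List.map_singleton, List.sum_singleton]
  abel

end blockSum

def sumDivPow (c : ℕ) : Module.End ℚ (ℕ → ℚ) where
  toFun F n := ∑ k ∈ Icc 1 n, F k / (k : ℚ) ^ c
  map_add' F F' := by ext n; simp [add_div, sum_add_distrib]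
  map_smul' r F := by ext n; simp [mul_div_assoc, mul_sum]

theorem sumDivPow_apply (c : ℕ) (F : ℕ → ℚ) (n : ℕ) :
    sumDivPow c F n = ∑ k ∈ Icc 1 n, F k / (k : ℚ) ^ c := rfl

theorem sumDivPow_congr {c : ℕ} {F F' : ℕ → ℚ} (h : ∀ k, 1 ≤ k → F k = F' k) :
    sumDivPow c F = sumDivPow c F' := by
  ext n
  rw [sumDivPow_apply, sumDivPow_apply]
  exact sum_congr rfl fun k hk => by rw [h k (mem_Icc.mp hk).1]

theorem sumDivPow_sub_pred (c : ℕ) (F : ℕ → ℚ) {n : ℕ} (hn : 1 ≤ n) :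
    sumDivPow c F n - sumDivPow c F (n - 1) = F n / (n : ℚ) ^ c := by
  obtain ⟨n, rfl⟩ := Nat.exists_eq_add_of_le' hn
  rw [sumDivPow_apply, sumDivPow_apply, sum_Icc_succ_top (by omega), Nat.add_sub_cancel]
  ring

theorem sumDivPow_eq_of_sub_pred {c : ℕ} {F F' : ℕ → ℚ} (h0 : F 0 = 0)
    (h : ∀ n, 1 ≤ n → F n - F (n - 1) = F' n / (n : ℚ) ^ c) : sumDivPow c F' = F := by
  ext n
  induction n with
  | zero => simp [sumDivPow_apply, h0]
  | succ n ih =>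
    rw [sumDivPow_apply, sum_Icc_succ_top (by omega), ← sumDivPow_apply, ih, ← h (n + 1) (by omega),
      Nat.add_sub_cancel]
    ring

def backDiff : Module.End ℚ (ℕ → ℚ) where
  toFun F n := F n - F (n - 1)
  map_add' F F' := by ext n; simp only [Pi.add_apply]; ring
  map_smul' r F := by ext n; simp only [Pi.smul_apply, smul_eq_mul, RingHom.id_apply]; ring

theorem sumDivPow_succ (c : ℕ) (F : ℕ → ℚ) :
    sumDivPow (c + 1) F = sumDivPow 1 (backDiff (sumDivPow c F)) := by
  ext n
  rw [sumDivPow_apply, sumDivPow_apply]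
  refine sum_congr rfl fun k hk => ?_
  rw [show backDiff (sumDivPow c F) k = _ - _ from rfl, sumDivPow_sub_pred c F (mem_Icc.mp hk).1,
    pow_succ, pow_one, div_div]

theorem sum_Icc_neg_one_pow_mul_choose {l n : ℕ} (hl : l < n) :
    ∑ q ∈ Icc (l + 1) n, (-1 : ℚ) ^ q * n.choose q = -((-1) ^ l * (n - 1).choose l) := by
  obtain ⟨n, rfl⟩ := Nat.exists_eq_add_of_le' (show 1 ≤ n by omega)
  have partial_sum :
      ∑ q ∈ range (l + 1), (-1 : ℚ) ^ q * (n + 1).choose q = (-1) ^ l * n.choose l := by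
    exact_mod_cast Int.alternating_sum_range_choose_eq_choose
  have full_sum : ∑ q ∈ range (n + 1 + 1), (-1 : ℚ) ^ q * (n + 1).choose q = 0 := by
    exact_mod_cast Int.alternating_sum_range_choose_of_ne (by omega)
  rw [← Ico_add_one_right_eq_Icc, sum_Ico_eq_sub _ (by omega), partial_sum, full_sum,
    Nat.add_sub_cancel, zero_sub]

theorem Hh_natList_cons {j : ℕ} (hj : 1 ≤ j) (y : List ℕ) (n : ℕ) :
    Hh n (natList (j :: y)) = ∑ l ∈ Icc 1 n, Hh (l - 1) (natList y) / (l : ℚ) ^ j := by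
  have : aSgn j = 1 := if_pos (by omega)
  simp [natList, Hh, this, div_eq_inv_mul]

def binomialSum (m : ℕ) (s : List ℕ) (n : ℕ) : ℚ :=
  ∑ k ∈ Icc 1 n, (-1 : ℚ) ^ k * Hh (k - 1) (natList s) * (n.choose k) / (k : ℚ) ^ m

theorem binomialSum_nil (m n : ℕ) :
    binomialSum m [] n = ∑ k ∈ Icc 1 n, (-1 : ℚ) ^ k * (n.choose k) / (k : ℚ) ^ m := by
  simp [binomialSum, natList, Hh]

theorem binomialSum_zero_nil {n : ℕ} (hn : 1 ≤ n) : binomialSum 0 [] n = -1 := by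
  simpa [binomialSum_nil] using sum_Icc_neg_one_pow_mul_choose hn

theorem sumDivPow_one_binomialSum (m : ℕ) (s : List ℕ) :
    sumDivPow 1 (binomialSum m s) = binomialSum (m + 1) s := by
  refine sumDivPow_eq_of_sub_pred (by simp [binomialSum]) fun n hn => ?_
  obtain ⟨n, rfl⟩ := Nat.exists_eq_add_of_le' hn
  have extend : binomialSum (m + 1) s n = ∑ k ∈ Icc 1 (n + 1),
      (-1 : ℚ) ^ k * Hh (k - 1) (natList s) * (n.choose k) / (k : ℚ) ^ (m + 1) := by
    rw [sum_Icc_succ_top (by omega), Nat.choose_succ_self]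
    simp [binomialSum]
  rw [Nat.add_sub_cancel, extend, binomialSum, binomialSum, ← sum_sub_distrib, sum_div]
  refine sum_congr rfl fun k hk => ?_
  obtain ⟨k, rfl⟩ := Nat.exists_eq_add_of_le' (mem_Icc.mp hk).1
  have absorb : ((n + 1 : ℕ) : ℚ) * n.choose k = (n + 1).choose (k + 1) * ((k + 1 : ℕ) : ℚ) := by
    exact_mod_cast Nat.add_one_mul_choose_eq n k
  nth_rewrite 1 [Nat.choose_succ_succ']
  push_cast at absorb ⊢
  field_simp
  linear_combination Hh k (natList s) * ((k : ℚ) + 1) ^ m * absorb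

theorem binomialSum_zero_cons {j : ℕ} (hj : 1 ≤ j) (y : List ℕ) (n : ℕ) :
    binomialSum 0 (j :: y) n = -binomialSum j y (n - 1) := by
  simp only [binomialSum, Hh_natList_cons hj, pow_zero, div_one, sum_mul, mul_sum]
  rw [sum_comm' (t' := Icc 1 (n - 1)) (s' := fun l => Icc (l + 1) n)
      (by intro q l; simp only [mem_Icc]; omega),
    ← sum_neg_distrib]
  refine sum_congr rfl fun l hl => ?_
  have hln : l < n := by rw [mem_Icc] at hl; omega
  calc ∑ q ∈ Icc (l + 1) n, (-1 : ℚ) ^ q * (Hh (l - 1) (natList y) / (l : ℚ) ^ j) * n.choose q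
      = Hh (l - 1) (natList y) / (l : ℚ) ^ j * ∑ q ∈ Icc (l + 1) n, (-1 : ℚ) ^ q * n.choose q := by
        rw [mul_sum]
        exact sum_congr rfl fun q _ => by ring
    _ = _ := by
        rw [sum_Icc_neg_one_pow_mul_choose hln]
        ring

theorem backDiff_binomialSum {j : ℕ} (hj : 1 ≤ j) (y : List ℕ) :
    backDiff (binomialSum j y) = binomialSum j y + binomialSum 0 (j :: y) := by
  ext n
  show binomialSum j y n - binomialSum j y (n - 1) = _
  rw [Pi.add_apply, binomialSum_zero_cons hj, sub_eq_add_neg]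

theorem sumDivPow_binomialSum {c : ℕ} (hc : 1 ≤ c) (m : ℕ) (s : List ℕ) :
    sumDivPow c (binomialSum m s)
      = binomialSum (c + m) s + blockSum c fun i j x => binomialSum j (x ++ (i + m) :: s) := by
  induction c, hc using Nat.le_induction with
  | base => rw [blockSum_one, add_zero, sumDivPow_one_binomialSum, add_comm]
  | succ c hc ih =>
    have step : ∀ {j : ℕ} (y : List ℕ), 1 ≤ j → sumDivPow 1 (backDiff (binomialSum j y))
        = binomialSum (j + 1) y + binomialSum 1 (j :: y) := fun y hj => by
      rw [backDiff_binomialSum hj, map_add, sumDivPow_one_binomialSum, sumDivPow_one_binomialSum]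
    rw [sumDivPow_succ, ih, map_add, map_add, step _ (by omega), map_blockSum, map_blockSum,
      blockSum_congr fun i j x _ hj => step _ hj, blockSum_succ hc]
    simp only [List.nil_append, List.cons_append, Nat.add_right_comm c 1 m, add_assoc, blockSum_add]

theorem sumDivPow_one_pow_binomialSum (a m : ℕ) (s : List ℕ) :
    (sumDivPow 1 ^ a) (binomialSum m s) = binomialSum (a + m) s := by
  induction a with
  | zero => rw [pow_zero, zero_add, Module.End.one_apply]
  | succ a ih =>
    rw [pow_succ', Module.End.mul_apply, ih, sumDivPow_one_binomialSum, Nat.add_right_comm]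

theorem Hstar_cons {s : ℤ} (hs : 0 < s) (r : List ℤ) :
    (fun n => Hstar n (s :: r)) = sumDivPow s.natAbs fun n => Hstar n r := by
  have : aSgn s = 1 := if_pos hs
  ext n
  simp [Hstar, sumDivPow_apply, this, div_eq_inv_mul]

theorem Hstar_replicate_one_append (a : ℕ) (r : List ℤ) :
    (fun n => Hstar n (List.replicate a 1 ++ r)) = (sumDivPow 1 ^ a) fun n => Hstar n r := by
  induction a with
  | zero => rfl
  | succ a ih =>
    rw [List.replicate_succ, List.cons_append, Hstar_cons one_pos, ih, pow_succ',
      Module.End.mul_apply, Int.natAbs_one]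

theorem Hstar_replicate_one (t : ℕ) {n : ℕ} (hn : 1 ≤ n) :
    Hstar n (List.replicate t 1) = -binomialSum t [] n := by
  induction t generalizing n with
  | zero => simp [Hstar, binomialSum_zero_nil hn]
  | succ t ih =>
    rw [List.replicate_succ, congrFun (Hstar_cons one_pos (List.replicate t 1)) n, Int.natAbs_one,
      sumDivPow_congr (F' := -binomialSum t []) fun k hk => ih hk, map_neg,
      sumDivPow_one_binomialSum, Pi.neg_apply]

theorem Hstar_eq_sumDivPow (a1 c1 a2 c2 t : ℕ) (hc1 : 1 ≤ c1) (hc2 : 1 ≤ c2) :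
    (fun n => Hstar n (List.replicate a1 1 ++ [(c1 : ℤ)] ++ List.replicate a2 1 ++ [(c2 : ℤ)]
      ++ List.replicate t 1))
      = -(sumDivPow 1 ^ a1 * sumDivPow c1 * sumDivPow 1 ^ a2 * sumDivPow c2) (binomialSum t []) := by
  simp only [List.append_assoc, List.cons_append, List.nil_append]
  rw [Hstar_replicate_one_append, Hstar_cons (s := c1) (by omega), Hstar_replicate_one_append,
    Hstar_cons (s := c2) (by omega), Int.natAbs_natCast, Int.natAbs_natCast,
    sumDivPow_congr (F' := -binomialSum t []) fun k hk => Hstar_replicate_one t hk]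
  simp only [Module.End.mul_apply, map_neg]

theorem Hstar_eq_binomialSums (n a1 c1 a2 c2 t : ℕ) (hc1 : 1 ≤ c1) (hc2 : 1 ≤ c2) :
    Hstar n (List.replicate a1 1 ++ [(c1 : ℤ)] ++ List.replicate a2 1 ++ [(c2 : ℤ)]
      ++ List.replicate t 1)
      = -binomialSum (a1 + c1 + a2 + c2 + t) [] n
        - (blockSum c2 fun i j x => binomialSum (a1 + c1 + a2 + j) (x ++ [i + t]) n)
        - (blockSum c1 fun i j x => binomialSum (a1 + j) (x ++ [i + a2 + c2 + t]) n)
        - (blockSum c1 fun i₁ j₁ x₁ => blockSum c2 fun i₂ j₂ x₂ =>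
            binomialSum (a1 + j₁) (x₁ ++ [i₁ + a2 + j₂] ++ x₂ ++ [i₂ + t]) n) := by
  rw [congrFun (Hstar_eq_sumDivPow a1 c1 a2 c2 t hc1 hc2) n]
  simp only [Module.End.mul_apply, sumDivPow_binomialSum hc2, sumDivPow_binomialSum hc1, map_add,
    map_blockSum, sumDivPow_one_pow_binomialSum, blockSum_add, Pi.add_apply, Pi.neg_apply,
    blockSum_apply]
  rw [blockSum_comm]
  simp only [← add_assoc, List.append_assoc, List.cons_append]
  abel

theorem stmt17_general (n a1 c1 a2 c2 t : ℕ) (hc1 : 1 ≤ c1) (hc2 : 1 ≤ c2) :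
    Hstar n (List.replicate a1 1 ++ [(c1 : ℤ)] ++ List.replicate a2 1 ++ [(c2 : ℤ)]
              ++ List.replicate t 1)
      = -(∑ k ∈ Finset.Icc 1 n,
            (-1 : ℚ) ^ k * (n.choose k) / (k : ℚ) ^ (a1+c1+a2+c2+t))
        - (∑ i2 ∈ Finset.range (c2 - 1), ∑ j2 ∈ Finset.range (c2 - 1 - i2),
            ((comps (c2 - 2 - i2 - j2)).map (fun x2 =>
              ∑ k ∈ Finset.Icc 1 n,
                (-1 : ℚ) ^ k * Hh (k-1) (natList (x2 ++ [i2 + 1 + t])) * (n.choose k)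
                  / (k : ℚ) ^ (a1+c1+a2+(j2+1)))).sum)
        - (∑ i1 ∈ Finset.range (c1 - 1), ∑ j1 ∈ Finset.range (c1 - 1 - i1),
            ((comps (c1 - 2 - i1 - j1)).map (fun x1 =>
              ∑ k ∈ Finset.Icc 1 n,
                (-1 : ℚ) ^ k * Hh (k-1) (natList (x1 ++ [i1 + 1 + a2 + c2 + t]))
                  * (n.choose k) / (k : ℚ) ^ (a1+(j1+1)))).sum)
        - (∑ i1 ∈ Finset.range (c1 - 1), ∑ j1 ∈ Finset.range (c1 - 1 - i1),
            ((comps (c1 - 2 - i1 - j1)).map (fun x1 =>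
              ∑ i2 ∈ Finset.range (c2 - 1), ∑ j2 ∈ Finset.range (c2 - 1 - i2),
                ((comps (c2 - 2 - i2 - j2)).map (fun x2 =>
                  ∑ k ∈ Finset.Icc 1 n,
                    (-1 : ℚ) ^ k
                      * Hh (k-1) (natList (x1 ++ [i1 + 1 + a2 + (j2 + 1)]
                          ++ x2 ++ [i2 + 1 + t]))
                      * (n.choose k) / (k : ℚ) ^ (a1+(j1+1)))).sum)).sum) := by
  rw [Hstar_eq_binomialSums n a1 c1 a2 c2 t hc1 hc2, binomialSum_nil]
  -- `blockSum` and `binomialSum` unfold to the nested sums on the right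
  rfl

theorem stmt17 (n a1 c1 a2 c2 t : ℕ) (hn : 1 ≤ n) (hc1 : 1 ≤ c1) (hc2 : 1 ≤ c2) :
    Hstar n (List.replicate a1 1 ++ [(c1 : ℤ)] ++ List.replicate a2 1 ++ [(c2 : ℤ)]
              ++ List.replicate t 1)
      = -(∑ k ∈ Finset.Icc 1 n,
            (-1 : ℚ) ^ k * (n.choose k) / (k : ℚ) ^ (a1+c1+a2+c2+t))
        - (∑ i2 ∈ Finset.range (c2 - 1), ∑ j2 ∈ Finset.range (c2 - 1 - i2),
            ((comps (c2 - 2 - i2 - j2)).map (fun x2 =>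
              ∑ k ∈ Finset.Icc 1 n,
                (-1 : ℚ) ^ k * Hh (k-1) (natList (x2 ++ [i2 + 1 + t])) * (n.choose k)
                  / (k : ℚ) ^ (a1+c1+a2+(j2+1)))).sum)
        - (∑ i1 ∈ Finset.range (c1 - 1), ∑ j1 ∈ Finset.range (c1 - 1 - i1),
            ((comps (c1 - 2 - i1 - j1)).map (fun x1 =>
              ∑ k ∈ Finset.Icc 1 n,
                (-1 : ℚ) ^ k * Hh (k-1) (natList (x1 ++ [i1 + 1 + a2 + c2 + t]))
                  * (n.choose k) / (k : ℚ) ^ (a1+(j1+1)))).sum)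
        - (∑ i1 ∈ Finset.range (c1 - 1), ∑ j1 ∈ Finset.range (c1 - 1 - i1),
            ((comps (c1 - 2 - i1 - j1)).map (fun x1 =>
              ∑ i2 ∈ Finset.range (c2 - 1), ∑ j2 ∈ Finset.range (c2 - 1 - i2),
                ((comps (c2 - 2 - i2 - j2)).map (fun x2 =>
                  ∑ k ∈ Finset.Icc 1 n,
                    (-1 : ℚ) ^ k
                      * Hh (k-1) (natList (x1 ++ [i1 + 1 + a2 + (j2 + 1)]
                          ++ x2 ++ [i2 + 1 + t]))
                      * (n.choose k) / (k : ℚ) ^ (a1+(j1+1)))).sum)).sum) :=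
  stmt17_general n a1 c1 a2 c2 t hc1 hc2
end
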